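/- For all f, g ∈ C(X,ℝ): liminf_{τ → 0⁺} (β(f + τ·g) − β(f))/τ ≥ sup_{μ ∈ M_max(f)} ∫ g dμ, and limsup_{τ → 0⁻} (β(f + τ·g) − β(f))/τ ≤ inf_{μ ∈ M_max(f)} ∫ g dμ. -/

import Mathlib

open MeasureTheory Topology Filter
open scoped NNReal

variable {X : Type*} [MetricSpace X] [CompactSpace X] [Nonempty X]
  [MeasurableSpace X] [BorelSpace X]

/-- The set of `T`-invariant Borel probability measures on `X`,
equipped (as a subtype) with the weak* topology. -/
def Minv (T : X → X) : Set (ProbabilityMeasure X) :=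
  {μ | (μ : Measure X).map T = (μ : Measure X)}

/-- The integral of a continuous function against a probability measure. -/
noncomputable def intf (f : C(X, ℝ)) (μ : ProbabilityMeasure X) : ℝ :=
  ∫ x, f x ∂(μ : Measure X)

/-- The maximum ergodic average `β(f) = sup {∫ f dμ : μ ∈ M}`. -/
noncomputable def beta (T : X → X) (f : C(X, ℝ)) : ℝ :=
  sSup (intf f '' Minv T)

/-- The set of `f`-maximizing measures. -/
def MMax (T : X → X) (f : C(X, ℝ)) : Set (ProbabilityMeasure X) :=
  {μ ∈ Minv T | intf f μ = beta T f}

/-!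
Every `f`-maximizing `μ` yields a supporting line: `∫ (f + τ • g) dμ ≤ β(f + τ • g)` reads
`β(f) + τ ∫ g dμ ≤ β(f + τ • g)` for all real `τ`, and dividing by `τ > 0` resp. `τ < 0` gives
the two bounds. Two further facts make this meaningful. Maximizing measures exist, since the
invariant measures form a closed, hence compact, subset of the compact space of probability
measures, on which `μ ↦ ∫ f dμ` is continuous (otherwise `sSup ∅ = 0` would be a junk value).
And `β(f + τ • g) ≤ β(f) + |τ| ‖g‖` bounds the difference quotients, so that the `liminf` and
`limsup` are not junk values either.
-/

open Set BoundedContinuousFunction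

section Slope

variable {F : ℝ → ℝ} {a b C : ℝ}

lemma le_liminf_slope_nhdsGT (hlow : ∀ τ, b + τ * a ≤ F τ) (hup : ∀ τ, F τ ≤ b + C * |τ|) :
    a ≤ liminf (fun τ => (F τ - b) / τ) (𝓝[>] 0) := by
  have hpos : ∀ᶠ τ in 𝓝[>] (0 : ℝ), 0 < τ := self_mem_nhdsWithin
  refine le_liminf_of_le (isCoboundedUnder_ge_of_eventually_le _ (x := C) ?_) ?_
  · filter_upwards [hpos] with τ hτ
    have h := hup τ
    rw [abs_of_pos hτ] at h
    rw [div_le_iff₀ hτ]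
    linarith
  · filter_upwards [hpos] with τ hτ
    rw [le_div_iff₀ hτ]
    linarith [hlow τ]

lemma limsup_slope_nhdsLT_le (hlow : ∀ τ, b + τ * a ≤ F τ) (hup : ∀ τ, F τ ≤ b + C * |τ|) :
    limsup (fun τ => (F τ - b) / τ) (𝓝[<] 0) ≤ a := by
  have hneg : ∀ᶠ τ in 𝓝[<] (0 : ℝ), τ < 0 := self_mem_nhdsWithin
  refine limsup_le_of_le (isCoboundedUnder_le_of_eventually_le _ (x := -C) ?_) ?_
  · filter_upwards [hneg] with τ hτ
    have h := hup τ
    rw [abs_of_neg hτ] at h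
    rw [le_div_iff_of_neg hτ]
    linarith
  · filter_upwards [hneg] with τ hτ
    rw [div_le_iff_of_neg hτ]
    linarith [hlow τ]

end Slope

section InvariantMeasures

omit [Nonempty X]

omit [CompactSpace X] in
lemma isClosed_Minv {T : X → X} (hT : Continuous T) : IsClosed (Minv T) := by
  have : Minv T = {μ | μ.map hT.measurable.aemeasurable = μ} := by
    ext μ
    simp [Minv, ← ProbabilityMeasure.toMeasure_injective.eq_iff]
  rw [this]
  exact isClosed_eq (ProbabilityMeasure.continuous_map hT) continuous_id

lemma continuous_intf (f : C(X, ℝ)) : Continuous (intf f) :=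
  ProbabilityMeasure.continuous_integral_boundedContinuousFunction (mkOfCompact f)

omit [BorelSpace X] in
lemma intf_le_norm (f : C(X, ℝ)) (μ : ProbabilityMeasure X) : intf f μ ≤ ‖f‖ := by
  simpa [intf] using (le_abs_self _).trans (norm_integral_le_of_norm_le_const (μ := (μ : Measure X))
    (Eventually.of_forall f.norm_coe_le_norm))

lemma intf_add (f g : C(X, ℝ)) (μ : ProbabilityMeasure X) :
    intf (f + g) μ = intf f μ + intf g μ :=
  integral_add ((mkOfCompact f).integrable _) ((mkOfCompact g).integrable _)

omit [CompactSpace X] [BorelSpace X] in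
lemma intf_smul (c : ℝ) (f : C(X, ℝ)) (μ : ProbabilityMeasure X) :
    intf (c • f) μ = c * intf f μ :=
  integral_const_mul c _

lemma intf_le_beta {T : X → X} (f : C(X, ℝ)) {μ : ProbabilityMeasure X} (hμ : μ ∈ Minv T) :
    intf f μ ≤ beta T f :=
  le_csSup ((isCompact_range (continuous_intf f)).bddAbove.mono (image_subset_range _ _)) ⟨μ, hμ, rfl⟩

lemma MMax_nonempty {T : X → X} (hT : Continuous T) (hM : (Minv T).Nonempty) (f : C(X, ℝ)) :
    (MMax T f).Nonempty := by
  obtain ⟨μ, hμ, hmax⟩ :=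
    ((isClosed_Minv hT).isCompact.image (continuous_intf f)).sSup_mem (hM.image _)
  exact ⟨μ, hμ, hmax⟩

lemma beta_add_le {T : X → X} (hM : (Minv T).Nonempty) (f h : C(X, ℝ)) :
    beta T (f + h) ≤ beta T f + ‖h‖ := by
  refine csSup_le (hM.image _) ?_
  rintro _ ⟨μ, hμ, rfl⟩
  simpa [intf_add] using add_le_add (intf_le_beta f hμ) (intf_le_norm h μ)

lemma beta_add_mul_intf_le {T : X → X} {f : C(X, ℝ)} {μ : ProbabilityMeasure X}
    (hμ : μ ∈ MMax T f) (g : C(X, ℝ)) (τ : ℝ) :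
    beta T f + τ * intf g μ ≤ beta T (f + τ • g) := by
  rw [← hμ.2, ← intf_smul, ← intf_add]
  exact intf_le_beta _ hμ.1

end InvariantMeasures

/-- One-sided derivative bounds for `β`:
`liminf_{τ→0⁺} (β(f+τg)−β(f))/τ ≥ sup_{μ ∈ M_max(f)} ∫ g dμ` and
`limsup_{τ→0⁻} (β(f+τg)−β(f))/τ ≤ inf_{μ ∈ M_max(f)} ∫ g dμ`. -/
theorem beta_one_sided_derivative_bounds (T : X → X) (hT : Continuous T)
    (hM : (Minv T).Nonempty) (f g : C(X, ℝ)) :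
    sSup (intf g '' MMax T f) ≤
      liminf (fun τ : ℝ => (beta T (f + τ • g) - beta T f) / τ) (𝓝[>] 0) ∧
    limsup (fun τ : ℝ => (beta T (f + τ • g) - beta T f) / τ) (𝓝[<] 0) ≤
      sInf (intf g '' MMax T f) := by
  have hup : ∀ τ : ℝ, beta T (f + τ • g) ≤ beta T f + ‖g‖ * |τ| := fun τ => by
    simpa [norm_smul, mul_comm] using beta_add_le hM f (τ • g)
  have hne := (MMax_nonempty hT hM f).image (intf g)
  constructor
  · refine csSup_le hne ?_
    rintro _ ⟨μ, hμ, rfl⟩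
    exact le_liminf_slope_nhdsGT (beta_add_mul_intf_le hμ g) hup
  · refine le_csInf hne ?_
    rintro _ ⟨μ, hμ, rfl⟩
    exact limsup_slope_nhdsLT_le (beta_add_mul_intf_le hμ g) hup
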